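/- arXiv:cs/0205038 — 2 statements merged into one kernel-verified Lean document; each statement's English description precedes it below -/
import Mathlib

section
/- For every type (k,n) with 1 ≤ k < n, the marking algorithm of type (k,n) is 2·H_k-competitive: there exists a constant a such that for every request sequence σ, the expected cost of the marking algorithm satisfies E[C_M(σ)] ≤ 2·H_k·OPT(σ) + a. -/
/-!
Paging model: vertices are `Fin n`, configurations are `k`-element subsets of `Fin n`.
`OPT` is the optimal offline cost, `expCost` the expected cost of a randomized
online algorithm (given by its transition kernel), starting from `{0,…,k−1}`.
`markingKernel` is the marking algorithm; `harmonic k` (from Mathlib) is the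
`k`-th harmonic number `H_k`.

STATEMENT: For every type `(k,n)` with `1 ≤ k < n`, the marking algorithm of type
`(k,n)` is `2·H_k`-competitive: there exists a constant `a` such that for every
request sequence `σ`, `E[C_M(σ)] ≤ 2·H_k·OPT(σ) + a`.
-/

open scoped ENNReal

/-- The initial configuration `{0, …, k−1}` as a subset of `Fin n`. -/
def initConf (k n : ℕ) : Finset (Fin n) :=
  Finset.univ.filter (fun v => (v : ℕ) < k)

/-- The cost of a sequence of configurations, starting from configuration `C`:
the sum over consecutive steps of the number of newly covered vertices. -/
def listCost {n : ℕ} : Finset (Fin n) → List (Finset (Fin n)) → ℕ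
  | _, [] => 0
  | C, D :: L => (D \ C).card + listCost D L

/-- `Cs` is a service of the request sequence `σ` by `k`-element configurations:
the `t`-th configuration covers the `t`-th request. -/
def Serves {n : ℕ} (k : ℕ) (σ : List (Fin n)) (Cs : List (Finset (Fin n))) : Prop :=
  List.Forall₂ (· ∈ ·) σ Cs ∧ ∀ C ∈ Cs, C.card = k

/-- The optimal offline cost of serving `σ`, starting from `{0,…,k−1}`. -/
noncomputable def OPT (k n : ℕ) (σ : List (Fin n)) : ℕ :=
  sInf {m | ∃ Cs, Serves k σ Cs ∧ listCost (initConf k n) Cs = m}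

/-- A (transition kernel of a) randomized online algorithm: given the request history,
the current configuration and a new request, produce a distribution over configurations. -/
abbrev Kernel (n : ℕ) := List (Fin n) → Finset (Fin n) → Fin n → PMF (Finset (Fin n))

/-- The distribution over configuration sequences induced by running kernel `K`
on request sequence `σ`, with history `hist` and current configuration `C`. -/
noncomputable def runFrom {n : ℕ} (K : Kernel n) :
    List (Fin n) → List (Fin n) → Finset (Fin n) → PMF (List (Finset (Fin n)))
  | [], _, _ => PMF.pure []
  | r :: rest, hist, C =>
      (K hist C r).bind fun C' =>
        (runFrom K rest (hist ++ [r]) C').map fun L => C' :: L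

/-- The distribution over configuration sequences induced by running kernel `K`
on request sequence `σ`, starting from the configuration `{0,…,k−1}`. -/
noncomputable def run {n : ℕ} (k : ℕ) (K : Kernel n) (σ : List (Fin n)) :
    PMF (List (Finset (Fin n))) :=
  runFrom K σ [] (initConf k n)

/-- The expected cost of the randomized online algorithm with kernel `K` on `σ`. -/
noncomputable def expCost {n : ℕ} (k : ℕ) (K : Kernel n) (σ : List (Fin n)) : ℝ :=
  ∑' Cs : List (Finset (Fin n)),
    ((run k K σ) Cs).toReal * (listCost (initConf k n) Cs : ℝ)

/-- One step of the marking process: mark `r`; if `k+1` vertices are marked,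
erase all marks except the one on `r`. -/
def markUpdate {n : ℕ} (k : ℕ) (M : Finset (Fin n)) (r : Fin n) : Finset (Fin n) :=
  if (insert r M).card = k + 1 then {r} else insert r M

/-- The set of marked vertices after processing the request sequence `σ`
(initially the vertices `{0,…,k−1}` are marked). -/
def marksAfter {n : ℕ} (k : ℕ) (σ : List (Fin n)) : Finset (Fin n) :=
  σ.foldl (markUpdate k) (initConf k n)

/-- The marking algorithm of type `(k,n)`: on a request `r`, first update the marks;
if `r` is covered do nothing, and otherwise evict a uniformly random unmarked
covered vertex and move its server to `r`. -/
noncomputable def markingKernel (k n : ℕ) : Kernel n := fun hist C r =>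
  let M := marksAfter k (hist ++ [r])
  if r ∈ C then PMF.pure C
  else if h : (C \ M).Nonempty then
    (PMF.uniformOfFinset (C \ M) h).map fun u => insert r (C.erase u)
  else PMF.pure (insert r (C.erase (if h2 : C.Nonempty then C.min' h2 else r)))

/-!
Within a phase, i.e. between two resets of the marks, the configuration of the marking algorithm
is uniformly distributed over the `k`-sets lying between the marked vertices and the pool formed
by the marked and the stale vertices. A request for a stale vertex therefore faults with
probability `(#pool - k) / (#pool - #marked)`, and the expected cost is an explicit sum of such
probabilities. A potential argument bounds this sum by `H_k` times the number of clean requests,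
and a second one bounds the number of clean requests by twice the cost of any offline service.
-/

open Finset

lemma harmonic_mono : Monotone harmonic :=
  monotone_nat_of_le_succ fun d => by
    rw [harmonic_succ]; exact le_add_of_nonneg_right (by positivity)

lemma one_le_harmonic {d : ℕ} (hd : 1 ≤ d) : (1 : ℝ) ≤ harmonic d := by
  exact_mod_cast (show harmonic 1 = 1 by simp).symm.le.trans (harmonic_mono hd)

lemma Finset.card_sdiff_le_card_sdiff_add {α : Type*} [DecidableEq α] {X C D : Finset α}
    (hCD : #C = #D) : #(X \ D) ≤ #(X \ C) + #(D \ C) := by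
  rw [← card_sdiff_comm hCD]
  exact (card_le_card (sdiff_triangle X C D)).trans (card_union_le _ _)

namespace PMF

variable {α β : Type*}

lemma tsum_pure_mul (a : α) (f : α → ℝ≥0∞) : ∑' b, pure a b * f b = f a := by
  rw [tsum_eq_single a fun b hb => by simp [hb]]
  simp

lemma tsum_bind_mul (p : PMF α) (q : α → PMF β) (f : β → ℝ≥0∞) :
    ∑' b, p.bind q b * f b = ∑' a, p a * ∑' b, q a b * f b := by
  simp_rw [bind_apply, ← ENNReal.tsum_mul_right, ← ENNReal.tsum_mul_left, mul_assoc]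
  exact ENNReal.tsum_comm

lemma tsum_map_mul (p : PMF α) (g : α → β) (f : β → ℝ≥0∞) :
    ∑' b, p.map g b * f b = ∑' a, p a * f (g a) := by
  rw [map, tsum_bind_mul]
  simp_rw [Function.comp_apply, tsum_pure_mul]

lemma tsum_uniformOfFinset_mul [DecidableEq α] (s : Finset α) (hs : s.Nonempty)
    (f : α → ℝ≥0∞) :
    ∑' a, uniformOfFinset s hs a * f a = (∑ a ∈ s, f a) / s.card := by
  rw [tsum_eq_sum (s := s) fun a ha => by simp [uniformOfFinset_apply_of_notMem hs ha],
    div_eq_mul_inv, Finset.sum_mul]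
  refine Finset.sum_congr rfl fun a ha => ?_
  rw [uniformOfFinset_apply_of_mem hs ha, mul_comm]

end PMF

namespace Finset

variable {α : Type*} {s t : Finset α}

noncomputable def uniformAvg (s : Finset α) (f : α → ℝ≥0∞) : ℝ≥0∞ :=
  (∑ a ∈ s, f a) / #s

lemma uniformAvg_add (f g : α → ℝ≥0∞) :
    uniformAvg s (fun a => f a + g a) = uniformAvg s f + uniformAvg s g := by
  simp [uniformAvg, sum_add_distrib, ENNReal.add_div]

lemma uniformAvg_congr {f g : α → ℝ≥0∞} (h : ∀ a ∈ s, f a = g a) :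
    uniformAvg s f = uniformAvg s g := by
  rw [uniformAvg, uniformAvg, sum_congr rfl h]

lemma uniformAvg_eq_uniformAvg (hs : s.Nonempty) (ht : t.Nonempty) {f g : α → ℝ≥0∞}
    (h : #t * ∑ a ∈ s, f a = #s * ∑ b ∈ t, g b) : uniformAvg s f = uniformAvg t g :=
  (ENNReal.div_eq_div_iff (by simpa using ht.ne_empty) (by simp) (by simpa using hs.ne_empty)
    (by simp)).2 h

end Finset

namespace Marking

variable {n k : ℕ}

lemma card_initConf (hkn : k ≤ n) : #(initConf k n) = k := by
  simp [initConf, Fin.card_filter_val_lt, hkn]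

/-- The state of a phase of the marking algorithm: `marked` holds the vertices requested so far in
the phase and `pool` adds the stale ones, marked in the previous phase and not requested since. -/
structure Phase (n : ℕ) where
  marked : Finset (Fin n)
  pool : Finset (Fin n)

namespace Phase

def init (k n : ℕ) : Phase n := ⟨initConf k n, initConf k n⟩

def step (k : ℕ) (p : Phase n) (r : Fin n) : Phase n :=
  if #(insert r p.marked) = k + 1 then ⟨{r}, insert r p.marked⟩
  else ⟨insert r p.marked, insert r p.pool⟩

structure Inv (k : ℕ) (p : Phase n) : Prop where
  marked_subset : p.marked ⊆ p.pool
  card_marked_le : #p.marked ≤ k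
  le_card_pool : k ≤ #p.pool
  card_pool_le : #p.pool ≤ #p.marked + k

variable {p : Phase n} {r : Fin n}

lemma step_marked (p : Phase n) (r : Fin n) : (p.step k r).marked = markUpdate k p.marked r := by
  unfold step markUpdate; split <;> rfl

lemma step_of_mem (hp : p.Inv k) (hr : r ∈ p.marked) : p.step k r = p := by
  have hM := hp.card_marked_le
  rw [step, insert_eq_self.2 hr, if_neg (by omega), insert_eq_self.2 (hp.marked_subset hr)]

lemma step_of_card_eq (hr : r ∉ p.marked) (hM : #p.marked = k) :
    p.step k r = ⟨{r}, insert r p.marked⟩ := by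
  rw [step, if_pos (by rw [card_insert_of_notMem hr, hM])]

lemma step_of_card_lt (hr : r ∉ p.marked) (hM : #p.marked < k) :
    p.step k r = ⟨insert r p.marked, insert r p.pool⟩ := by
  rw [step, if_neg (by rw [card_insert_of_notMem hr]; omega)]

lemma inv_init (hkn : k ≤ n) : (init k n).Inv k := by
  have h := card_initConf hkn
  exact ⟨subset_rfl, h.le, h.ge, by simp only [init, h]; omega⟩

lemma Inv.step (hk : 1 ≤ k) (hp : p.Inv k) (r : Fin n) : (p.step k r).Inv k := by
  by_cases hr : r ∈ p.marked
  · rwa [step_of_mem hp hr]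
  obtain ⟨hMW, hM, hW, hWM⟩ := hp
  rcases hM.lt_or_eq with hM | hM
  · rw [step_of_card_lt hr hM]
    have := card_insert_le r p.pool
    have := card_le_card (subset_insert r p.pool)
    refine ⟨insert_subset_insert r hMW, ?_, ?_, ?_⟩ <;>
      simp only [card_insert_of_notMem hr] <;> omega
  · rw [step_of_card_eq hr hM]
    refine ⟨by simp, ?_, ?_, ?_⟩ <;>
      simp only [card_singleton, card_insert_of_notMem hr] <;> omega

end Phase

def phaseAfter (k : ℕ) (σ : List (Fin n)) : Phase n :=
  σ.foldl (Phase.step k) (Phase.init k n)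

lemma phaseAfter_append (σ : List (Fin n)) (r : Fin n) :
    phaseAfter k (σ ++ [r]) = (phaseAfter k σ).step k r := by
  simp [phaseAfter]

lemma phaseAfter_marked (σ : List (Fin n)) : (phaseAfter k σ).marked = marksAfter k σ := by
  induction σ using List.reverseRecOn with
  | nil => rfl
  | append_singleton σ r ih =>
    rw [phaseAfter_append, Phase.step_marked, ih, marksAfter, marksAfter, List.foldl_append]
    rfl

lemma inv_phaseAfter (hk : 1 ≤ k) (hkn : k ≤ n) (σ : List (Fin n)) :
    (phaseAfter k σ).Inv k := by
  induction σ using List.reverseRecOn with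
  | nil => exact Phase.inv_init hkn
  | append_singleton σ r ih => rw [phaseAfter_append]; exact ih.step hk r

def runSum (k : ℕ) (f : Phase n → Fin n → ℝ) : List (Fin n) → Phase n → ℝ
  | [], _ => 0
  | r :: σ, p => f p r + runSum k f σ (p.step k r)

lemma runSum_le_of_potential {f g : Phase n → Fin n → ℝ} (Φ : Phase n → ℝ) (hk : 1 ≤ k)
    (hΦ : ∀ p : Phase n, p.Inv k → 0 ≤ Φ p)
    (hstep : ∀ (p : Phase n) r, p.Inv k → f p r + Φ (p.step k r) ≤ g p r + Φ p) :
    ∀ (σ : List (Fin n)) (p : Phase n), p.Inv k → runSum k f σ p ≤ runSum k g σ p + Φ p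
  | [], p, hp => by simpa [runSum] using hΦ p hp
  | r :: σ, p, hp => by
    have := runSum_le_of_potential Φ hk hΦ hstep σ (p.step k r) (hp.step hk r)
    have := hstep p r hp
    simp only [runSum]
    linarith

lemma runSum_const_mul (c : ℝ) (f : Phase n → Fin n → ℝ) :
    ∀ (σ : List (Fin n)) (p : Phase n),
      runSum k (fun p r => c * f p r) σ p = c * runSum k f σ p
  | [], _ => by simp [runSum]
  | r :: σ, p => by simp [runSum, runSum_const_mul c f σ, mul_add]

section Cost

variable {p : Phase n} {r : Fin n}

/-- The probability that the request `r` is a fault when the configuration is uniformly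
distributed over the `k`-sets between `p.marked` and `p.pool`. -/
noncomputable def faultProb (k : ℕ) (p : Phase n) (r : Fin n) : ℝ :=
  if r ∈ p.marked then 0
  else if #p.marked < k ∧ r ∈ p.pool then (#p.pool - k : ℕ) / (#p.pool - #p.marked : ℕ)
  else 1

/-- Indicator of a clean request, one requested neither in the current nor in the previous phase. -/
noncomputable def clean (k : ℕ) (p : Phase n) (r : Fin n) : ℝ :=
  if r ∉ p.marked ∧ (#p.marked = k ∨ r ∉ p.pool) then 1 else 0

/-- A stale request faults with probability `(#p.pool - k) / d`, where `d = #p.pool - #p.marked`,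
and lowers `d` by one: the harmonic factor prepays these faults. -/
noncomputable def harmonicPotential (k : ℕ) (p : Phase n) : ℝ :=
  (#p.pool - k : ℕ) * ((harmonic (#p.pool - #p.marked) : ℝ) - 1)

lemma harmonicPotential_init (hkn : k ≤ n) : harmonicPotential k (Phase.init k n) = 0 := by
  simp [harmonicPotential, Phase.init, card_initConf hkn]

lemma harmonicPotential_nonneg (hp : p.Inv k) : 0 ≤ harmonicPotential k p := by
  have := hp.card_marked_le
  rcases Nat.eq_zero_or_pos (#p.pool - k) with h | h
  · simp [harmonicPotential, h]
  · have := one_le_harmonic (show 1 ≤ #p.pool - #p.marked by omega)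
    exact mul_nonneg (Nat.cast_nonneg _) (by linarith)

lemma faultProb_add_harmonicPotential_le (hp : p.Inv k) (r : Fin n) :
    faultProb k p r + harmonicPotential k (p.step k r)
      ≤ harmonic k * clean k p r + harmonicPotential k p := by
  by_cases hr : r ∈ p.marked
  · simp [Phase.step_of_mem hp hr, faultProb, clean, hr]
  have hΦ := harmonicPotential_nonneg hp
  obtain ⟨hMW, hM, hW, hWM⟩ := hp
  rcases hM.lt_or_eq with hM | hM
  · rw [Phase.step_of_card_lt hr hM]
    by_cases hrW : r ∈ p.pool
    · -- a stale request: the potential drops by exactly the fault probability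
      obtain ⟨d, hd⟩ : ∃ d, #p.pool - #p.marked = d + 1 :=
        ⟨#p.pool - #p.marked - 1, by omega⟩
      have hf : faultProb k p r = (#p.pool - k : ℕ) / ((d : ℝ) + 1) := by
        simp [faultProb, hr, hM, hrW, hd]
      have hc : clean k p r = 0 := by simp [clean, hrW, hM.ne]
      have hΦ' : harmonicPotential k ⟨insert r p.marked, insert r p.pool⟩
          = (#p.pool - k : ℕ) * ((harmonic d : ℝ) - 1) := by
        simp [harmonicPotential, insert_eq_self.2 hrW, card_insert_of_notMem hr,
          show #p.pool - (#p.marked + 1) = d by omega]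
      have hΦ : harmonicPotential k p
          = (#p.pool - k : ℕ) * ((harmonic d : ℝ) + ((d : ℝ) + 1)⁻¹ - 1) := by
        simp [harmonicPotential, hd]
      rw [hf, hc, hΦ', hΦ]
      apply le_of_eq
      ring
    · have hHk : (harmonic (#p.pool - #p.marked) : ℝ) ≤ harmonic k := by
        exact_mod_cast harmonic_mono (by omega)
      have hf : faultProb k p r = 1 := by simp [faultProb, hr, hrW]
      have hc : clean k p r = 1 := by simp [clean, hr, hrW]
      have hΦ' : harmonicPotential k ⟨insert r p.marked, insert r p.pool⟩
          = ((#p.pool - k : ℕ) + 1) * ((harmonic (#p.pool - #p.marked) : ℝ) - 1) := by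
        simp only [harmonicPotential, card_insert_of_notMem hr, card_insert_of_notMem hrW,
          show #p.pool + 1 - k = #p.pool - k + 1 by omega,
          show #p.pool + 1 - (#p.marked + 1) = #p.pool - #p.marked by omega]
        push_cast
        ring
      rw [hf, hc, hΦ', harmonicPotential]
      nlinarith
  · have hf : faultProb k p r = 1 := by simp [faultProb, hr, hM]
    have hc : clean k p r = 1 := by simp [clean, hr, hM]
    have hΦ' : harmonicPotential k ⟨{r}, insert r p.marked⟩ = harmonic k - 1 := by
      simp [harmonicPotential, card_insert_of_notMem hr, hM]
    rw [Phase.step_of_card_eq hr hM, hf, hc, hΦ']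
    linarith

lemma runSum_faultProb_le (hk : 1 ≤ k) (σ : List (Fin n)) (hp : p.Inv k) :
    runSum k (faultProb k) σ p
      ≤ harmonic k * runSum k (clean k) σ p + harmonicPotential k p := by
  rw [← runSum_const_mul]
  exact runSum_le_of_potential _ hk (fun _ => harmonicPotential_nonneg)
    (fun _ r hp => faultProb_add_harmonicPotential_le hp r) σ p hp

noncomputable def offlinePotential (k : ℕ) (p : Phase n) (C : Finset (Fin n)) : ℝ :=
  #(p.pool \ C) + #(p.marked \ C) - (#p.pool - k : ℕ)

lemma offlinePotential_init (hkn : k ≤ n) :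
    offlinePotential k (Phase.init k n) (initConf k n) = 0 := by
  simp [offlinePotential, Phase.init, card_initConf hkn]

lemma sub_le_card_pool_sdiff {C : Finset (Fin n)} (hC : #C = k) :
    ((#p.pool - k : ℕ) : ℝ) ≤ #(p.pool \ C) := by
  exact_mod_cast hC ▸ le_card_sdiff C p.pool

lemma offlinePotential_nonneg {C : Finset (Fin n)} (hC : #C = k) :
    0 ≤ offlinePotential k p C := by
  have := sub_le_card_pool_sdiff (p := p) hC
  rw [offlinePotential]
  linarith [(#(p.marked \ C)).cast_nonneg (α := ℝ)]

lemma clean_add_offlinePotential_le (hp : p.Inv k) {C D : Finset (Fin n)} (hrD : r ∈ D)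
    (hC : #C = k) (hD : #D = k) :
    clean k p r + offlinePotential k (p.step k r) D ≤ 2 * #(D \ C) + offlinePotential k p C := by
  have hW : (#(p.pool \ D) : ℝ) ≤ #(p.pool \ C) + #(D \ C) := by
    exact_mod_cast card_sdiff_le_card_sdiff_add (X := p.pool) (hC.trans hD.symm)
  have hM : (#(p.marked \ D) : ℝ) ≤ #(p.marked \ C) + #(D \ C) := by
    exact_mod_cast card_sdiff_le_card_sdiff_add (X := p.marked) (hC.trans hD.symm)
  have hWC := sub_le_card_pool_sdiff (p := p) hC
  by_cases hr : r ∈ p.marked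
  · rw [Phase.step_of_mem hp hr, clean, if_neg (by tauto), offlinePotential, offlinePotential]
    linarith
  rcases hp.card_marked_le.lt_or_eq with hMk | hMk
  · have hclean : clean k p r - (#(insert r p.pool) - k : ℕ) = -(#p.pool - k : ℕ) := by
      by_cases hrW : r ∈ p.pool
      · simp [clean, hrW, hMk.ne, insert_eq_self.2 hrW]
      · have := hp.le_card_pool
        simp only [clean, hr, hrW, card_insert_of_notMem hrW, not_false_eq_true, or_true,
          and_self, if_true, show #p.pool + 1 - k = #p.pool - k + 1 by omega]
        push_cast
        ring
    rw [Phase.step_of_card_lt hr hMk, offlinePotential, offlinePotential,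
      insert_sdiff_of_mem _ hrD, insert_sdiff_of_mem _ hrD]
    linarith
  · have hsingle : #({r} \ D) = 0 := by simp [hrD]
    rw [Phase.step_of_card_eq hr hMk, offlinePotential, offlinePotential, insert_sdiff_of_mem _ hrD,
      hsingle, clean, if_pos ⟨hr, Or.inl hMk⟩, card_insert_of_notMem hr, hMk,
      show k + 1 - k = 1 by omega]
    push_cast
    linarith

lemma runSum_clean_le (hk : 1 ≤ k) :
    ∀ {σ : List (Fin n)} {Cs : List (Finset (Fin n))} {p : Phase n} {C : Finset (Fin n)},
      List.Forall₂ (· ∈ ·) σ Cs → (∀ D ∈ Cs, #D = k) → p.Inv k → #C = k →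
      runSum k (clean k) σ p ≤ 2 * listCost C Cs + offlinePotential k p C
  | [], [], _, _, .nil, _, _, hC => by simpa [runSum, listCost] using offlinePotential_nonneg hC
  | r :: _, D :: _, p, C, .cons hrD hσ, hCs, hp, hC => by
    have hD := hCs D List.mem_cons_self
    have := runSum_clean_le hk hσ (fun E hE => hCs E (List.mem_cons_of_mem _ hE)) (hp.step hk r) hD
    have := clean_add_offlinePotential_le hp hrD hC hD
    simp only [runSum, listCost]
    push_cast
    linarith

lemma exists_serves_listCost_eq_OPT (hk : 1 ≤ k) (hkn : k ≤ n) (σ : List (Fin n)) :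
    ∃ Cs, Serves k σ Cs ∧ listCost (initConf k n) Cs = OPT k n σ := by
  have hcover : ∀ r : Fin n, ∃ C : Finset (Fin n), r ∈ C ∧ #C = k := fun r => by
    obtain ⟨C, hrC, -, hC⟩ := exists_subsuperset_card_eq (subset_univ {r}) (by simpa) (by simpa)
    exact ⟨C, hrC (mem_singleton_self r), hC⟩
  choose f hrf hf using hcover
  have hserves : Serves k σ (σ.map f) :=
    ⟨List.forall₂_map_right_iff.2 (List.forall₂_same.2 fun r _ => hrf r),
      by simpa using fun r _ => hf r⟩
  exact Nat.sInf_mem (s := {m | ∃ Cs, Serves k σ Cs ∧ listCost (initConf k n) Cs = m})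
    ⟨_, σ.map f, hserves, rfl⟩

end Cost

section Distribution

variable {M W C : Finset (Fin n)} {r : Fin n} {hist : List (Fin n)} {p : Phase n}

def confs (k : ℕ) (M W : Finset (Fin n)) : Finset (Finset (Fin n)) :=
  {C ∈ W.powerset | M ⊆ C ∧ #C = k}

@[simp]
lemma mem_confs : C ∈ confs k M W ↔ C ⊆ W ∧ M ⊆ C ∧ #C = k := by
  simp [confs]

lemma card_confs (hMW : M ⊆ W) (hMk : #M ≤ k) :
    #(confs k M W) = (#W - #M).choose (k - #M) := by
  rw [← card_sdiff_of_subset hMW, ← card_powersetCard]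
  refine card_bij' (fun C _ => C \ M) (fun S _ => S ∪ M) (fun C hC => ?_) (fun S hS => ?_)
    (fun C hC => ?_) (fun S hS => ?_)
  · rw [mem_confs] at hC
    rw [mem_powersetCard, card_sdiff_of_subset hC.2.1, hC.2.2]
    exact ⟨sdiff_subset_sdiff hC.1 subset_rfl, rfl⟩
  · rw [mem_powersetCard, subset_sdiff] at hS
    rw [mem_confs, card_union_of_disjoint hS.1.2, hS.2]
    exact ⟨union_subset hS.1.1 hMW, subset_union_right, by omega⟩
  · exact sdiff_union_of_subset (mem_confs.1 hC).2.1
  · exact union_sdiff_cancel_right (subset_sdiff.1 (mem_powersetCard.1 hS).1).2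

lemma card_confs_erase_mul (hMW : M ⊆ W) (hMk : #M ≤ k) (hrM : r ∉ M) (hrW : r ∈ W) :
    #(confs k M (W.erase r)) * (#W - #M) = #(confs k M W) * (#W - k) := by
  have hMW' : M ⊆ W.erase r := subset_erase.2 ⟨hMW, hrM⟩
  have h := card_le_card hMW'
  rw [card_erase_of_mem hrW] at h
  have := card_pos.2 ⟨r, hrW⟩
  obtain ⟨d, hd⟩ : ∃ d, #W - #M = d + 1 := ⟨#W - #M - 1, by omega⟩
  rw [card_confs hMW' hMk, card_confs hMW hMk, card_erase_of_mem hrW,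
    show #W - 1 - #M = d by omega, hd, Nat.choose_mul_succ_eq,
    show d + 1 - (k - #M) = #W - k by omega]

lemma card_confs_insert_mul_of_mem (hMW : M ⊆ W) (hMk : #M < k) (hrM : r ∉ M) (hrW : r ∈ W) :
    #(confs k (insert r M) W) * (#W - #M) = #(confs k M W) * (k - #M) := by
  have h := card_le_card (insert_subset hrW hMW)
  rw [card_insert_of_notMem hrM] at h
  obtain ⟨d, hd⟩ : ∃ d, #W - #M = d + 1 := ⟨#W - #M - 1, by omega⟩
  rw [card_confs (insert_subset hrW hMW) (by rw [card_insert_of_notMem hrM]; omega),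
    card_confs hMW hMk.le, card_insert_of_notMem hrM, show #W - (#M + 1) = d by omega,
    show k - (#M + 1) = k - #M - 1 by omega, hd, mul_comm, Nat.add_one_mul_choose_eq,
    Nat.sub_add_cancel (by omega)]

lemma card_confs_insert_mul_of_notMem (hMW : M ⊆ W) (hMk : #M < k) (hrM : r ∉ M)
    (hrW : r ∉ W) :
    #(confs k (insert r M) (insert r W)) * (#W + 1 - k) = #(confs k M W) * (k - #M) := by
  have h := card_le_card hMW
  obtain ⟨j, hj⟩ : ∃ j, k - #M = j + 1 := ⟨k - #M - 1, by omega⟩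
  rw [card_confs (insert_subset_insert r hMW) (by rw [card_insert_of_notMem hrM]; omega),
    card_confs hMW hMk.le, card_insert_of_notMem hrM, card_insert_of_notMem hrW,
    show #W + 1 - (#M + 1) = #W - #M by omega, show k - (#M + 1) = j by omega, hj,
    Nat.choose_succ_right_eq, show #W + 1 - k = #W - #M - j by omega]

lemma confs_nonempty (hMW : M ⊆ W) (hMk : #M ≤ k) (hkW : k ≤ #W) :
    (confs k M W).Nonempty := by
  obtain ⟨C, hMC, hCW, hC⟩ := exists_subsuperset_card_eq hMW hMk hkW
  exact ⟨C, mem_confs.2 ⟨hCW, hMC, hC⟩⟩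

lemma confs_eq_confs_empty (hMW : M ⊆ W) (hM : #M = k) : confs k M W = confs k ∅ M := by
  ext C
  simp only [mem_confs, empty_subset, true_and]
  constructor
  · rintro ⟨-, hMC, hC⟩
    exact ⟨(eq_of_subset_of_card_le hMC (by omega)).ge, hC⟩
  · rintro ⟨hCM, hC⟩
    obtain rfl := eq_of_subset_of_card_le hCM (by omega)
    exact ⟨hMW, subset_rfl, hC⟩

lemma confs_self (hM : #M = k) : confs k M M = {M} := by
  ext C
  simp only [mem_confs, mem_singleton]
  exact ⟨fun h => eq_of_subset_of_card_le h.1 (by omega),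
    by rintro rfl; exact ⟨subset_rfl, subset_rfl, hM⟩⟩

lemma filter_mem_confs : {C ∈ confs k M W | r ∈ C} = confs k (insert r M) W := by
  ext C
  simp only [mem_filter, mem_confs, insert_subset_iff]
  tauto

lemma filter_notMem_confs : {C ∈ confs k M W | r ∉ C} = confs k M (W.erase r) := by
  ext C
  simp only [mem_filter, mem_confs, subset_erase]
  tauto

/-- Replacing `u` by `r` in `C` is a bijection between the pairs `(C, u)` with `r ∉ C` and
`u ∈ C \ M`, and the pairs `(C', v)` with `r ∈ C'` and `v ∈ W \ C'`. -/
lemma sum_sum_insert_erase (hrM : r ∉ M) (g : Finset (Fin n) → ℝ≥0∞) :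
    ∑ C ∈ confs k M (W.erase r), ∑ u ∈ C \ M, g (insert r (C.erase u))
      = ∑ C' ∈ confs k (insert r M) (insert r W), #(W \ C') * g C' := by
  simp_rw [← nsmul_eq_mul, ← sum_const]
  rw [sum_sigma', sum_sigma']
  refine sum_bij' (fun x _ => ⟨insert r (x.1.erase x.2), x.2⟩)
    (fun y _ => ⟨insert y.2 (y.1.erase r), y.2⟩) ?_ ?_ ?_ ?_ (fun _ _ => rfl)
  · rintro ⟨C, u⟩ hx
    simp only [mem_sigma, mem_confs, mem_sdiff, subset_erase] at hx ⊢
    grind [card_insert_of_notMem, card_erase_of_mem]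
  · rintro ⟨C, v⟩ hy
    simp only [mem_sigma, mem_confs, mem_sdiff, subset_erase] at hy ⊢
    grind [card_insert_of_notMem, card_erase_of_mem]
  · rintro ⟨C, u⟩ hx
    simp only [mem_sigma, mem_confs, mem_sdiff, subset_erase] at hx
    simp only [Sigma.mk.injEq, heq_eq_eq, and_true]
    rw [erase_insert (by grind), insert_erase hx.2.1]
  · rintro ⟨C, v⟩ hy
    simp only [mem_sigma, mem_confs, mem_sdiff] at hy
    simp only [Sigma.mk.injEq, heq_eq_eq, and_true]
    rw [erase_insert (by grind), insert_erase (hy.1.2.1 (mem_insert_self r M))]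

lemma markingKernel_of_mem (hrC : r ∈ C) : markingKernel k n hist C r = PMF.pure C :=
  if_pos hrC

lemma markingKernel_of_notMem (hrC : r ∉ C) (h : (C \ marksAfter k (hist ++ [r])).Nonempty) :
    markingKernel k n hist C r
      = (PMF.uniformOfFinset _ h).map fun u => insert r (C.erase u) := by
  simp only [markingKernel, if_neg hrC, dif_pos h]

lemma exists_markingKernel_eq_map (hrC : r ∉ C) :
    ∃ q : PMF (Fin n), markingKernel k n hist C r = q.map fun u => insert r (C.erase u) := by
  by_cases h : (C \ marksAfter k (hist ++ [r])).Nonempty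
  · exact ⟨_, markingKernel_of_notMem hrC h⟩
  · refine ⟨PMF.pure (if h' : C.Nonempty then C.min' h' else r), ?_⟩
    simp only [markingKernel, if_neg hrC, dif_neg h, PMF.pure_map]

noncomputable def expCostFrom (K : Kernel n) (σ hist : List (Fin n)) (C : Finset (Fin n)) :
    ℝ≥0∞ :=
  ∑' L, runFrom K σ hist C L * listCost C L

lemma expCostFrom_nil (K : Kernel n) : expCostFrom K [] hist C = 0 := by
  simp [expCostFrom, runFrom, listCost]

lemma expCostFrom_cons (K : Kernel n) (σ : List (Fin n)) :
    expCostFrom K (r :: σ) hist C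
      = ∑' C', K hist C r C' * (#(C' \ C) + expCostFrom K σ (hist ++ [r]) C') := by
  rw [expCostFrom, runFrom, PMF.tsum_bind_mul]
  refine tsum_congr fun C' => ?_
  simp only [PMF.tsum_map_mul, listCost, Nat.cast_add, mul_add, ENNReal.tsum_add,
    ENNReal.tsum_mul_right, PMF.tsum_coe, one_mul, expCostFrom]

lemma expCostFrom_markingKernel_cons (σ : List (Fin n)) :
    expCostFrom (markingKernel k n) (r :: σ) hist C
      = (if r ∈ C then 0 else 1)
        + ∑' C', markingKernel k n hist C r C'
            * expCostFrom (markingKernel k n) σ (hist ++ [r]) C' := by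
  rw [expCostFrom_cons]
  simp only [mul_add, ENNReal.tsum_add]
  congr 1
  split_ifs with hrC
  · simp [markingKernel_of_mem hrC]
  · obtain ⟨q, hq⟩ := exists_markingKernel_eq_map (k := k) (hist := hist) hrC
    simp_rw [hq, PMF.tsum_map_mul, insert_sdiff_of_notMem _ hrC,
      sdiff_eq_empty_iff_subset.2 (erase_subset _ C), insert_empty, card_singleton, Nat.cast_one,
      mul_one]
    exact q.tsum_coe

lemma expCost_eq_toReal (K : Kernel n) (σ : List (Fin n)) :
    expCost k K σ = (expCostFrom K σ [] (initConf k n)).toReal := by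
  rw [expCost, expCostFrom, ENNReal.tsum_toReal_eq fun L =>
    ENNReal.mul_ne_top (PMF.apply_ne_top _ _) (ENNReal.natCast_ne_top _)]
  simp [run]

lemma faultProb_nonneg (p : Phase n) (r : Fin n) : 0 ≤ faultProb k p r := by
  unfold faultProb; split_ifs <;> positivity

lemma runSum_nonneg {f : Phase n → Fin n → ℝ} (hf : ∀ p r, 0 ≤ f p r) :
    ∀ (σ : List (Fin n)) (p : Phase n), 0 ≤ runSum k f σ p
  | [], _ => le_rfl
  | r :: σ, p => add_nonneg (hf p r) (runSum_nonneg hf σ _)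

lemma uniformAvg_confs_fault_of_card_lt (hMW : M ⊆ W) (hMk : #M < k) (hkW : k ≤ #W)
    (hrM : r ∉ M) :
    uniformAvg (confs k M W) (fun C => if r ∈ C then 0 else 1)
      = ENNReal.ofReal (faultProb k ⟨M, W⟩ r) := by
  have hN0 : (#(confs k M W) : ℝ≥0∞) ≠ 0 :=
    Nat.cast_ne_zero.2 (confs_nonempty hMW hMk.le hkW).card_pos.ne'
  simp only [uniformAvg, sum_ite, sum_const_zero, zero_add, sum_const, nsmul_one,
    filter_notMem_confs]
  by_cases hrW : r ∈ W
  · have hpos : (0 : ℝ) < (#W - #M : ℕ) := by exact_mod_cast (show 0 < #W - #M by omega)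
    simp only [faultProb, hrM, hMk, hrW, and_self, if_true, if_false]
    rw [ENNReal.ofReal_div_of_pos hpos, ENNReal.ofReal_natCast, ENNReal.ofReal_natCast,
      ENNReal.div_eq_div_iff (Nat.cast_ne_zero.2 (by omega)) (by simp) hN0 (by simp)]
    exact_mod_cast (mul_comm _ _).trans (card_confs_erase_mul hMW hMk.le hrM hrW)
  · simp only [faultProb, hrM, hrW, erase_eq_of_notMem hrW, and_false, if_false,
      ENNReal.ofReal_one]
    exact ENNReal.div_self hN0 (by simp)

lemma mul_sum_confs_markingKernel (hMk : #M < k) (hrM : r ∉ M)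
    (hmarks : marksAfter k (hist ++ [r]) = insert r M) (g : Finset (Fin n) → ℝ≥0∞) :
    (k - #M : ℕ) * ∑ C ∈ confs k M W, ∑' C', markingKernel k n hist C r C' * g C'
      = (k - #M : ℕ) * ∑ C ∈ confs k (insert r M) W, g C
        + ∑ C' ∈ confs k (insert r M) (insert r W), (#(insert r W) - k : ℕ) * g C' := by
  have hevict : ∀ C ∈ confs k M (W.erase r),
      (k - #M : ℕ) * ∑' C', markingKernel k n hist C r C' * g C'
        = ∑ u ∈ C \ M, g (insert r (C.erase u)) := by
    intro C hC
    rw [mem_confs, subset_erase] at hC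
    have hCM : C \ marksAfter k (hist ++ [r]) = C \ M := by
      rw [hmarks, sdiff_insert_of_notMem hC.1.2]
    have hcard : #(C \ M) = k - #M := by rw [card_sdiff_of_subset hC.2.1, hC.2.2]
    have hne : (C \ marksAfter k (hist ++ [r])).Nonempty := by
      rw [hCM, ← card_pos, hcard]; omega
    rw [markingKernel_of_notMem hC.1.2 hne, PMF.tsum_map_mul, PMF.tsum_uniformOfFinset_mul, hCM,
      hcard, ENNReal.mul_div_cancel (Nat.cast_ne_zero.2 (by omega)) (by simp)]
  rw [← sum_filter_add_sum_filter_not _ (r ∈ ·), filter_mem_confs, filter_notMem_confs,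
    mul_add, mul_sum (confs k M (W.erase r)), sum_congr rfl hevict, sum_sum_insert_erase hrM]
  congr 1
  · refine congrArg _ (sum_congr rfl fun C hC => ?_)
    rw [markingKernel_of_mem ((mem_confs.1 hC).2.1 (mem_insert_self r M)), PMF.tsum_pure_mul]
  · refine sum_congr rfl fun C' hC' => ?_
    rw [mem_confs] at hC'
    rw [← insert_sdiff_of_mem W (hC'.2.1 (mem_insert_self r M)), card_sdiff_of_subset hC'.1,
      hC'.2.2]

lemma uniformAvg_confs_markingKernel_of_card_lt (hMW : M ⊆ W) (hMk : #M < k) (hkW : k ≤ #W)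
    (hrM : r ∉ M) (hmarks : marksAfter k (hist ++ [r]) = insert r M)
    (g : Finset (Fin n) → ℝ≥0∞) :
    uniformAvg (confs k M W) (fun C => ∑' C', markingKernel k n hist C r C' * g C')
      = uniformAvg (confs k (insert r M) (insert r W)) g := by
  have hMk' : #(insert r M) ≤ k := by rw [card_insert_of_notMem hrM]; omega
  have hkW' : k ≤ #(insert r W) := hkW.trans (card_le_card (subset_insert r W))
  refine uniformAvg_eq_uniformAvg (confs_nonempty hMW hMk.le hkW)
    (confs_nonempty (insert_subset_insert r hMW) hMk' hkW') ?_
  rw [← ENNReal.mul_right_inj (Nat.cast_ne_zero.2 (by omega : k - #M ≠ 0)) (by simp),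
    mul_left_comm, mul_sum_confs_markingKernel hMk hrM hmarks, ← mul_sum]
  by_cases hrW : r ∈ W
  · rw [insert_eq_self.2 hrW, ← add_mul, ← mul_assoc, ← Nat.cast_add, ← Nat.cast_mul,
      show k - #M + (#W - k) = #W - #M by omega, card_confs_insert_mul_of_mem hMW hMk hrM hrW]
    push_cast
    ring
  · have hempty : confs k (insert r M) W = ∅ := eq_empty_of_forall_notMem fun C hC =>
      hrW ((mem_confs.1 hC).1 ((mem_confs.1 hC).2.1 (mem_insert_self r M)))
    rw [hempty, sum_empty, mul_zero, zero_add, ← mul_assoc, ← Nat.cast_mul,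
      card_insert_of_notMem hrW, card_confs_insert_mul_of_notMem hMW hMk hrM hrW]
    push_cast
    ring

lemma uniformAvg_confs_fault (hk : 1 ≤ k) (hp : p.Inv k) (r : Fin n) :
    uniformAvg (confs k p.marked p.pool) (fun C => if r ∈ C then 0 else 1)
      = ENNReal.ofReal (faultProb k p r) := by
  by_cases hr : r ∈ p.marked
  · rw [uniformAvg_congr fun C hC => if_pos ((mem_confs.1 hC).2.1 hr)]
    simp [uniformAvg, faultProb, hr]
  rcases hp.card_marked_le.lt_or_eq with hM | hM
  · exact uniformAvg_confs_fault_of_card_lt hp.marked_subset hM hp.le_card_pool hr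
  · -- a full phase looks like a phase with no marks and pool `p.marked`
    rw [confs_eq_confs_empty hp.marked_subset hM, uniformAvg_confs_fault_of_card_lt
      (empty_subset _) (by rw [card_empty]; omega) hM.ge (notMem_empty r)]
    simp [faultProb, hr, hM]

lemma uniformAvg_confs_markingKernel (hk : 1 ≤ k) (hp : p.Inv k) {r : Fin n}
    (hmarks : marksAfter k (hist ++ [r]) = (p.step k r).marked)
    (g : Finset (Fin n) → ℝ≥0∞) :
    uniformAvg (confs k p.marked p.pool) (fun C => ∑' C', markingKernel k n hist C r C' * g C')
      = uniformAvg (confs k (p.step k r).marked (p.step k r).pool) g := by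
  by_cases hr : r ∈ p.marked
  · rw [Phase.step_of_mem hp hr]
    refine uniformAvg_congr fun C hC => ?_
    rw [markingKernel_of_mem ((mem_confs.1 hC).2.1 hr), PMF.tsum_pure_mul]
  rcases hp.card_marked_le.lt_or_eq with hM | hM
  · rw [Phase.step_of_card_lt hr hM] at hmarks ⊢
    exact uniformAvg_confs_markingKernel_of_card_lt hp.marked_subset hM hp.le_card_pool hr hmarks g
  · rw [Phase.step_of_card_eq hr hM] at hmarks ⊢
    rw [confs_eq_confs_empty hp.marked_subset hM]
    exact uniformAvg_confs_markingKernel_of_card_lt (empty_subset _) (by rw [card_empty]; omega)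
      hM.ge (notMem_empty r) hmarks g

lemma uniformAvg_expCostFrom (hk : 1 ≤ k) (hkn : k ≤ n) :
    ∀ (σ hist : List (Fin n)),
      uniformAvg (confs k (phaseAfter k hist).marked (phaseAfter k hist).pool)
          (expCostFrom (markingKernel k n) σ hist)
        = ENNReal.ofReal (runSum k (faultProb k) σ (phaseAfter k hist))
  | [], hist => by simp [expCostFrom_nil, uniformAvg, runSum]
  | r :: σ, hist => by
    have hp := inv_phaseAfter hk hkn hist
    have hmarks : marksAfter k (hist ++ [r]) = ((phaseAfter k hist).step k r).marked := by
      rw [← phaseAfter_append, phaseAfter_marked]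
    rw [show expCostFrom (markingKernel k n) (r :: σ) hist = _ from
      funext fun C => expCostFrom_markingKernel_cons σ, uniformAvg_add,
      uniformAvg_confs_fault hk hp, uniformAvg_confs_markingKernel hk hp hmarks,
      ← phaseAfter_append, uniformAvg_expCostFrom hk hkn σ, runSum, phaseAfter_append,
      ENNReal.ofReal_add (faultProb_nonneg _ _) (runSum_nonneg faultProb_nonneg _ _)]

lemma expCost_markingKernel (hk : 1 ≤ k) (hkn : k ≤ n) (σ : List (Fin n)) :
    expCost k (markingKernel k n) σ = runSum k (faultProb k) σ (Phase.init k n) := by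
  have h := uniformAvg_expCostFrom hk hkn σ []
  simp only [phaseAfter, List.foldl_nil, Phase.init, confs_self (card_initConf hkn), uniformAvg,
    sum_singleton, card_singleton, Nat.cast_one, div_one] at h
  rw [expCost_eq_toReal, h, ENNReal.toReal_ofReal (runSum_nonneg faultProb_nonneg _ _)]
  rfl

end Distribution

end Marking

open Marking

/-- The marking algorithm of type `(k,n)`, `1 ≤ k < n`, is `2H_k`-competitive. -/
theorem marking_is_two_Hk_competitive (k n : ℕ) (hk : 1 ≤ k) (hkn : k < n) :
    ∃ a : ℝ, ∀ σ : List (Fin n),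
      expCost k (markingKernel k n) σ
        ≤ 2 * (harmonic k : ℝ) * (OPT k n σ : ℝ) + a := by
  refine ⟨0, fun σ => ?_⟩
  obtain ⟨Cs, ⟨hσ, hCs⟩, hcost⟩ := exists_serves_listCost_eq_OPT hk hkn.le σ
  have hp := Phase.inv_init hkn.le
  have hclean := runSum_clean_le hk hσ hCs hp (card_initConf hkn.le)
  rw [hcost, offlinePotential_init hkn.le, add_zero] at hclean
  calc expCost k (markingKernel k n) σ
      = runSum k (faultProb k) σ (Phase.init k n) := expCost_markingKernel hk hkn.le σ
    _ ≤ harmonic k * runSum k (clean k) σ (Phase.init k n) := by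
        simpa [harmonicPotential_init hkn.le] using runSum_faultProb_le hk σ hp
    _ ≤ harmonic k * (2 * OPT k n σ) := by
        gcongr
        exact zero_le_one.trans (one_le_harmonic hk)
    _ = 2 * harmonic k * OPT k n σ + 0 := by ring
end

section
/- For every n ≥ 2, the marking algorithm of type (n−1, n) is H_{n−1}-competitive: there exists a constant a such that for every request sequence σ, the expected cost of the marking algorithm satisfies E[C_M(σ)] ≤ H_{n−1}·OPT(σ) + a. -/
/-!
Paging model: vertices are `Fin n`, configurations are `k`-element subsets of `Fin n`.
`OPT` is the optimal offline cost, `expCost` the expected cost of a randomized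
online algorithm (given by its transition kernel), starting from `{0,…,k−1}`.
`markingKernel` is the marking algorithm; `harmonic k` (from Mathlib) is `H_k`.

STATEMENT: For every `n ≥ 2`, the marking algorithm of type `(n−1, n)` is
`H_{n−1}`-competitive: there exists a constant `a` such that for every request
sequence `σ`, `E[C_M(σ)] ≤ H_{n−1}·OPT(σ) + a`.
-/

open scoped ENNReal

lemma tsum_pure_mul {α : Type*} (a : α) (g : α → ℝ≥0∞) :
    ∑' b, (PMF.pure a) b * g b = g a := by
  rw [tsum_eq_single a]
  · simp [PMF.pure_apply]
  · intro b hb; simp [PMF.pure_apply, hb]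

lemma tsum_bind_mul {α β : Type*} (p : PMF α) (q : α → PMF β) (g : β → ℝ≥0∞) :
    ∑' b, (p.bind q) b * g b = ∑' a, p a * ∑' b, q a b * g b := by
  simp only [PMF.bind_apply]
  calc ∑' b, (∑' a, p a * q a b) * g b
      = ∑' b, ∑' a, p a * q a b * g b := by
        refine tsum_congr fun b => ?_
        rw [← ENNReal.tsum_mul_right]
    _ = ∑' a, ∑' b, p a * q a b * g b := ENNReal.tsum_comm
    _ = ∑' a, p a * ∑' b, q a b * g b := by
        refine tsum_congr fun a => ?_
        simp_rw [mul_assoc]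
        rw [ENNReal.tsum_mul_left]

lemma tsum_map_mul {α β : Type*} (p : PMF α) (f : α → β) (g : β → ℝ≥0∞) :
    ∑' b, (p.map f) b * g b = ∑' a, p a * g (f a) := by
  rw [PMF.map, tsum_bind_mul]
  refine tsum_congr fun a => ?_
  congr 1
  exact tsum_pure_mul (f a) g

lemma tsum_uniform_mul {α : Type*} (s : Finset α) (h : s.Nonempty) (g : α → ℝ≥0∞) :
    ∑' a, (PMF.uniformOfFinset s h) a * g a = ∑ a ∈ s, (s.card : ℝ≥0∞)⁻¹ * g a := by
  rw [tsum_eq_sum (s := s)]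
  · exact Finset.sum_congr rfl fun a ha => by rw [PMF.uniformOfFinset_apply, if_pos ha]
  · intro a ha; rw [PMF.uniformOfFinset_apply, if_neg ha, zero_mul]

section Development
variable {n : ℕ}
open Finset

/-- Expected cost functional in `ℝ≥0∞`. -/
noncomputable def EC (K : Kernel n) (σ hist : List (Fin n)) (C : Finset (Fin n)) : ℝ≥0∞ :=
  ∑' Cs, runFrom K σ hist C Cs * (listCost C Cs : ℝ≥0∞)

lemma EC_nil (K : Kernel n) (hist : List (Fin n)) (C : Finset (Fin n)) :
    EC K [] hist C = 0 := by
  have := tsum_pure_mul (α := List (Finset (Fin n))) [] (fun Cs => (listCost C Cs : ℝ≥0∞))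
  simpa [EC, runFrom, listCost] using this

lemma EC_cons (K : Kernel n) (r : Fin n) (rest hist : List (Fin n)) (C : Finset (Fin n)) :
    EC K (r :: rest) hist C =
      ∑' C', K hist C r C' * (((C' \ C).card : ℝ≥0∞) + EC K rest (hist ++ [r]) C') := by
  unfold EC
  show ∑' Cs, ((K hist C r).bind fun C' =>
        (runFrom K rest (hist ++ [r]) C').map fun L => C' :: L) Cs * _ = _
  rw [tsum_bind_mul]
  refine tsum_congr fun C' => ?_
  congr 1
  rw [tsum_map_mul]
  have hL : ∀ L, (listCost C (C' :: L) : ℝ≥0∞) = ((C' \ C).card : ℝ≥0∞) + (listCost C' L : ℝ≥0∞) := by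
    intro L; simp [listCost]
  simp_rw [hL, mul_add, ENNReal.tsum_add, ENNReal.tsum_mul_right, PMF.tsum_coe, one_mul]

/-! ### Marking bookkeeping -/

lemma marksAfter_append (k : ℕ) (hist : List (Fin n)) (r : Fin n) :
    marksAfter k (hist ++ [r]) = markUpdate k (marksAfter k hist) r := by
  simp [marksAfter, List.foldl_append]

lemma mem_markUpdate_self (k : ℕ) (M : Finset (Fin n)) (r : Fin n) :
    r ∈ markUpdate k M r := by
  unfold markUpdate; split <;> simp

lemma initConf_eq_erase (hn : 1 ≤ n) :
    initConf (n-1) n = Finset.univ.erase ⟨n-1, by omega⟩ := by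
  ext v
  simp only [initConf, Finset.mem_filter, Finset.mem_univ, true_and, Finset.mem_erase, and_true]
  have := v.isLt
  constructor
  · intro h he
    rw [he] at h
    simp at h
  · intro h
    rcases Nat.lt_or_ge (v : ℕ) (n-1) with h2 | h2
    · exact h2
    · exact absurd (Fin.ext (by omega : (v:ℕ) = n - 1)) h

lemma card_initConf' (hn : 1 ≤ n) : (initConf (n-1) n).card = n - 1 := by
  rw [initConf_eq_erase hn, Finset.card_erase_of_mem (Finset.mem_univ _), Finset.card_univ]
  simp

lemma card_markUpdate_le {k : ℕ} (hk : 1 ≤ k) (M : Finset (Fin n)) (r : Fin n)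
    (hM : M.card ≤ k) : (markUpdate k M r).card ≤ k := by
  unfold markUpdate
  split_ifs with h
  · simpa using hk
  · have h2 := Finset.card_insert_le r M
    omega

lemma card_marksAfter_le (hn : 2 ≤ n) (hist : List (Fin n)) :
    (marksAfter (n-1) hist).card ≤ n - 1 := by
  unfold marksAfter
  have hk : 1 ≤ n - 1 := by omega
  have main : ∀ (l : List (Fin n)) (M : Finset (Fin n)), M.card ≤ n - 1 →
      (l.foldl (markUpdate (n-1)) M).card ≤ n - 1 := by
    intro l
    induction l with
    | nil => intro M hM; simpa using hM
    | cons r rest ih =>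
      intro M hM
      exact ih _ (card_markUpdate_le hk M r hM)
  exact main _ _ (le_of_eq (card_initConf' (by omega)))

lemma sdiff_nonempty_of_card_le {M : Finset (Fin n)} (h : M.card ≤ n - 1) (hn : 1 ≤ n) :
    (Finset.univ \ M).Nonempty := by
  rw [Finset.sdiff_nonempty]
  intro hsub
  have := Finset.card_le_card hsub
  simp [Finset.card_univ] at this
  omega

lemma card_univ_sdiff (M : Finset (Fin n)) : (Finset.univ \ M).card = n - M.card := by
  rw [Finset.card_sdiff_of_subset (Finset.subset_univ M)]
  simp [Finset.card_univ]

lemma markUpdate_of_mem {k : ℕ} {M : Finset (Fin n)} {r : Fin n} (h : r ∈ M)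
    (hM : M.card ≤ k) : markUpdate k M r = M := by
  unfold markUpdate
  rw [Finset.insert_eq_self.2 h, if_neg (by omega)]

lemma reset_iff {k : ℕ} {M : Finset (Fin n)} {r : Fin n} (hM : M.card ≤ k) :
    (insert r M).card = k + 1 ↔ (r ∉ M ∧ M.card = k) := by
  constructor
  · intro h
    by_cases hr : r ∈ M
    · rw [Finset.insert_eq_self.2 hr] at h; omega
    · rw [Finset.card_insert_of_notMem hr] at h; exact ⟨hr, by omega⟩
  · rintro ⟨hr, hc⟩
    rw [Finset.card_insert_of_notMem hr, hc]

lemma markUpdate_reset {k : ℕ} {M : Finset (Fin n)} {r : Fin n} (hM : M.card ≤ k)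
    (h : r ∉ M) (hc : M.card = k) : markUpdate k M r = {r} := by
  unfold markUpdate
  rw [if_pos ((reset_iff hM).2 ⟨h, hc⟩)]

lemma markUpdate_no_reset {k : ℕ} {M : Finset (Fin n)} {r : Fin n}
    (h : ¬ (insert r M).card = k + 1) : markUpdate k M r = insert r M := by
  unfold markUpdate; rw [if_neg h]

lemma univ_sdiff_eq_singleton {k : ℕ} {M : Finset (Fin n)} {r : Fin n} (hkn : k = n - 1)
    (hn : 1 ≤ n) (h : r ∉ M) (hc : M.card = k) : Finset.univ \ M = {r} := by
  have hcard : (Finset.univ \ M).card = 1 := by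
    rw [card_univ_sdiff]; omega
  obtain ⟨a, ha⟩ := Finset.card_eq_one.1 hcard
  have : r ∈ Finset.univ \ M := by simp [h]
  rw [ha] at this ⊢
  simp at this
  rw [this]

lemma univ_sdiff_insert (M : Finset (Fin n)) (r : Fin n) :
    Finset.univ \ insert r M = (Finset.univ \ M).erase r := by
  ext x; simp [and_comm]

/-! ### Hole configurations -/

lemma erase_sdiff_erase {u r : Fin n} (h : u ≠ r) :
    (Finset.univ.erase u) \ (Finset.univ.erase r) = {r} := by
  ext x
  by_cases hx : x = r <;>
    simp [Finset.mem_sdiff, Finset.mem_erase, hx, h, Ne.symm h]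

lemma insert_erase_erase {u r : Fin n} (h : u ≠ r) :
    insert r ((Finset.univ.erase r).erase u) = Finset.univ.erase u := by
  ext x
  by_cases hx : x = r <;>
    simp [Finset.mem_insert, Finset.mem_erase, hx, Ne.symm h]

lemma erase_sdiff_self_marks {M : Finset (Fin n)} {r : Fin n} (h : r ∈ M) :
    (Finset.univ.erase r) \ M = Finset.univ \ M := by
  ext x
  by_cases hx : x = r <;> simp [hx, h]

/-! ### Kernel evaluation -/

lemma markingKernel_of_mem {k : ℕ} {hist : List (Fin n)} {C : Finset (Fin n)} {r : Fin n}
    (h : r ∈ C) : markingKernel k n hist C r = PMF.pure C := by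
  simp [markingKernel, h]

lemma markingKernel_of_notMem {k : ℕ} {hist : List (Fin n)} {C : Finset (Fin n)} {r : Fin n}
    (h : r ∉ C) (hne : (C \ marksAfter k (hist ++ [r])).Nonempty) :
    markingKernel k n hist C r
      = (PMF.uniformOfFinset _ hne).map fun u => insert r (C.erase u) := by
  simp [markingKernel, h, hne]

/-! ### Phase cost and resets -/

noncomputable def phcost (k : ℕ) : List (Fin n) → Finset (Fin n) → ℝ≥0∞
  | [], _ => 0
  | r :: rest, M =>
      (if r ∈ M then 0 else (((Finset.univ \ M).card : ℝ≥0∞))⁻¹)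
        + phcost k rest (markUpdate k M r)

def resets (k : ℕ) : List (Fin n) → Finset (Fin n) → ℕ
  | [], _ => 0
  | r :: rest, M =>
      (if (insert r M).card = k + 1 then 1 else 0) + resets k rest (markUpdate k M r)

/-! ### The key identity -/

lemma key_identity (hn : 2 ≤ n) (σ : List (Fin n)) : ∀ hist : List (Fin n),
    ∑ h ∈ Finset.univ \ marksAfter (n-1) hist,
        EC (markingKernel (n-1) n) σ hist (Finset.univ.erase h)
      = ((Finset.univ \ marksAfter (n-1) hist).card : ℝ≥0∞)
          * phcost (n-1) σ (marksAfter (n-1) hist) := by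
  induction σ with
  | nil => intro hist; simp [EC_nil, phcost]
  | cons r rest ih =>
    intro hist
    have hk1 : 1 ≤ n - 1 := by omega
    set M := marksAfter (n-1) hist with hM
    have hMcard : M.card ≤ n - 1 := card_marksAfter_le hn hist
    have hMup : marksAfter (n-1) (hist ++ [r]) = markUpdate (n-1) M r :=
      marksAfter_append _ _ _
    by_cases hrM : r ∈ M
    · -- request already marked
      have hupd : markUpdate (n-1) M r = M := markUpdate_of_mem hrM hMcard
      have hterm : ∀ h ∈ Finset.univ \ M,
          EC (markingKernel (n-1) n) (r :: rest) hist (Finset.univ.erase h)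
            = EC (markingKernel (n-1) n) rest (hist ++ [r]) (Finset.univ.erase h) := by
        intro h hh
        have hhr : r ≠ h := by
          rintro rfl
          simp [Finset.mem_sdiff, hrM] at hh
        have hrC : r ∈ Finset.univ.erase h := by simp [hhr]
        rw [EC_cons, markingKernel_of_mem hrC, tsum_pure_mul]
        simp
      rw [Finset.sum_congr rfl hterm]
      have := ih (hist ++ [r])
      rw [hMup, hupd] at this
      rw [this]
      congr 1
      show phcost (n-1) rest M = _
      simp [phcost, hrM, hupd]
    · -- new request
      have hrS : r ∈ Finset.univ \ M := by simp [hrM]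
      set M' := markUpdate (n-1) M r with hM'
      have hM'card : M'.card ≤ n - 1 := card_markUpdate_le hk1 M r hMcard
      have hrM' : r ∈ M' := mem_markUpdate_self _ _ _
      -- the term for h = r
      have hrC : r ∉ Finset.univ.erase r := by simp
      have hCeq : (Finset.univ.erase r) \ marksAfter (n-1) (hist ++ [r])
          = Finset.univ \ M' := by
        rw [hMup]
        exact erase_sdiff_self_marks hrM'
      have hne : ((Finset.univ.erase r) \ marksAfter (n-1) (hist ++ [r])).Nonempty := by
        rw [hCeq]
        exact sdiff_nonempty_of_card_le hM'card (by omega)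
      have hS'ne : (Finset.univ \ M').Nonempty := by rw [← hCeq]; exact hne
      have hS'0 : ((Finset.univ \ M').card : ℝ≥0∞) ≠ 0 := by
        simpa using Finset.card_ne_zero_of_mem hS'ne.choose_spec
      have hS'top : ((Finset.univ \ M').card : ℝ≥0∞) ≠ ⊤ := by simp
      have ihr := ih (hist ++ [r])
      rw [hMup] at ihr
      have hterm_r :
          EC (markingKernel (n-1) n) (r :: rest) hist (Finset.univ.erase r)
            = 1 + phcost (n-1) rest M' := by
        rw [EC_cons, markingKernel_of_notMem hrC hne, tsum_map_mul, tsum_uniform_mul]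
        have hstep : ∀ u ∈ Finset.univ \ M',
            (((Finset.univ.erase r) \ marksAfter (n-1) (hist ++ [r])).card : ℝ≥0∞)⁻¹ *
              ((((insert r ((Finset.univ.erase r).erase u)) \ (Finset.univ.erase r)).card : ℝ≥0∞)
                + EC (markingKernel (n-1) n) rest (hist ++ [r])
                    (insert r ((Finset.univ.erase r).erase u)))
            = ((Finset.univ \ M').card : ℝ≥0∞)⁻¹ *
              (1 + EC (markingKernel (n-1) n) rest (hist ++ [r]) (Finset.univ.erase u)) := by
          intro u hu
          have hur : u ≠ r := by
            intro h; rw [h] at hu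
            simp [hrM'] at hu
          rw [hCeq, insert_erase_erase hur, _root_.erase_sdiff_erase hur]
          simp
        rw [Finset.sum_congr hCeq hstep, ← Finset.mul_sum, Finset.sum_add_distrib,
          Finset.sum_const, ihr, nsmul_eq_mul, mul_one]
        rw [mul_add, ← mul_assoc, ENNReal.inv_mul_cancel hS'0 hS'top, one_mul]
      -- terms for h ≠ r
      have hterm : ∀ h ∈ (Finset.univ \ M).erase r,
          EC (markingKernel (n-1) n) (r :: rest) hist (Finset.univ.erase h)
            = EC (markingKernel (n-1) n) rest (hist ++ [r]) (Finset.univ.erase h) := by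
        intro h hh
        have hhr : r ≠ h := fun he => (Finset.mem_erase.1 hh).1 he.symm
        have hrC2 : r ∈ Finset.univ.erase h := by simp [hhr]
        rw [EC_cons, markingKernel_of_mem hrC2, tsum_pure_mul]
        simp
      rw [← Finset.add_sum_erase _ _ hrS, hterm_r, Finset.sum_congr rfl hterm]
      have hcost : phcost (n-1) (r :: rest) M
          = (((Finset.univ \ M).card : ℝ≥0∞))⁻¹ + phcost (n-1) rest M' := by
        simp [phcost, hrM, hM']
      rw [hcost]
      by_cases hres : (insert r M).card = n - 1 + 1
      · -- reset
        obtain ⟨hr2, hc2⟩ := (reset_iff hMcard).1 hres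
        have hsing : Finset.univ \ M = {r} := univ_sdiff_eq_singleton rfl (by omega) hr2 hc2
        rw [hsing]
        simp
      · -- no reset
        have hins : M' = insert r M := markUpdate_no_reset hres
        have herase : (Finset.univ \ M).erase r = Finset.univ \ M' := by
          rw [hins, univ_sdiff_insert]
        rw [Finset.sum_congr herase (fun _ _ => rfl), ihr]
        have hcard : (Finset.univ \ M).card = (Finset.univ \ M').card + 1 := by
          have h1 : (Finset.univ \ M').card = ((Finset.univ \ M).erase r).card := by
            rw [herase]
          rw [h1, Finset.card_erase_of_mem hrS]
          have := Finset.card_pos.2 ⟨r, hrS⟩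
          omega
        rw [hcard]
        have hScast : (((Finset.univ \ M').card + 1 : ℕ) : ℝ≥0∞)
            = ((Finset.univ \ M').card : ℝ≥0∞) + 1 := by push_cast; ring
        rw [hScast]
        have hS10 : ((Finset.univ \ M').card : ℝ≥0∞) + 1 ≠ 0 := by simp
        have hS1top : ((Finset.univ \ M').card : ℝ≥0∞) + 1 ≠ ⊤ := by simp
        rw [mul_add, ENNReal.mul_inv_cancel hS10 hS1top]
        ring

/-! ### Finiteness and harmonic bound for `phcost` -/

lemma phcost_ne_top (hn : 2 ≤ n) : ∀ (σ : List (Fin n)) (M : Finset (Fin n)),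
    M.card ≤ n - 1 → phcost (n-1) σ M ≠ ⊤ := by
  intro σ
  induction σ with
  | nil => intro M hM; simp [phcost]
  | cons r rest ih =>
    intro M hM
    have h1 : (markUpdate (n-1) M r).card ≤ n - 1 :=
      card_markUpdate_le (by omega) M r hM
    have h2 := ih (markUpdate (n-1) M r) h1
    have hstep : (if r ∈ M then 0 else (((Finset.univ \ M).card : ℝ≥0∞))⁻¹) ≠ ⊤ := by
      split_ifs
      · simp
      · have := sdiff_nonempty_of_card_le hM (by omega)
        have hc : ((Finset.univ \ M).card : ℝ≥0∞) ≠ 0 := by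
          simpa using Finset.card_ne_zero_of_mem this.choose_spec
        simp [hc]
    show (if r ∈ M then 0 else (((Finset.univ \ M).card : ℝ≥0∞))⁻¹)
        + phcost (n-1) rest (markUpdate (n-1) M r) ≠ ⊤
    exact ENNReal.add_ne_top.2 ⟨hstep, h2⟩

lemma one_le_harmonic_s1 {m : ℕ} (hm : 1 ≤ m) : 1 ≤ harmonic m := by
  induction m with
  | zero => omega
  | succ j ih =>
    rcases Nat.eq_zero_or_pos j with rfl | hj
    · norm_num [harmonic_succ]
    · have := ih hj
      have hpos : (0:ℚ) < (↑(j+1))⁻¹ := by positivity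
      rw [harmonic_succ]
      linarith

lemma phcost_bound (hn : 2 ≤ n) : ∀ (σ : List (Fin n)) (M : Finset (Fin n)),
    M.card ≤ n - 1 →
    (phcost (n-1) σ M).toReal
      ≤ (harmonic (n-1) : ℝ) * (resets (n-1) σ M : ℝ)
        + ((harmonic (n - M.card) : ℝ) - 1) := by
  intro σ
  induction σ with
  | nil =>
    intro M hM
    have h1 : 1 ≤ n - M.card := by omega
    have := one_le_harmonic_s1 h1
    have hcast : (1:ℝ) ≤ (harmonic (n - M.card) : ℝ) := by exact_mod_cast this
    simp only [phcost, resets, ENNReal.toReal_zero]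
    push_cast
    linarith
  | cons r rest ih =>
    intro M hM
    have hM' : (markUpdate (n-1) M r).card ≤ n - 1 := card_markUpdate_le (by omega) M r hM
    have hrec := ih (markUpdate (n-1) M r) hM'
    have hsplit : (phcost (n-1) (r :: rest) M).toReal
        = (if r ∈ M then 0 else (((Finset.univ \ M).card : ℝ≥0∞))⁻¹).toReal
          + (phcost (n-1) rest (markUpdate (n-1) M r)).toReal := by
      show ((if r ∈ M then 0 else (((Finset.univ \ M).card : ℝ≥0∞))⁻¹)
          + phcost (n-1) rest (markUpdate (n-1) M r)).toReal = _
      rw [ENNReal.toReal_add]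
      · split_ifs
        · simp
        · have hne := sdiff_nonempty_of_card_le hM (by omega)
          have hc : ((Finset.univ \ M).card : ℝ≥0∞) ≠ 0 := by
            simpa using Finset.card_ne_zero_of_mem hne.choose_spec
          simp [hc]
      · exact phcost_ne_top hn rest _ hM'
    have hres : (resets (n-1) (r :: rest) M : ℝ)
        = (if (insert r M).card = n - 1 + 1 then (1:ℝ) else 0)
          + (resets (n-1) rest (markUpdate (n-1) M r) : ℝ) := by
      show ((((if (insert r M).card = (n-1) + 1 then 1 else 0)
          + resets (n-1) rest (markUpdate (n-1) M r)) : ℕ) : ℝ) = _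
      push_cast
      split_ifs <;> norm_num
    rw [hsplit, hres]
    have hH0 : (0:ℝ) ≤ (harmonic (n-1) : ℝ) := by
      have := one_le_harmonic_s1 (m := n-1) (by omega)
      have : (1:ℝ) ≤ (harmonic (n-1) : ℝ) := by exact_mod_cast this
      linarith
    by_cases hrM : r ∈ M
    · -- marked request
      have hupd : markUpdate (n-1) M r = M := markUpdate_of_mem hrM hM
      have hnores : ¬ (insert r M).card = n - 1 + 1 := by
        rw [Finset.insert_eq_self.2 hrM]; omega
      rw [hupd] at hrec ⊢
      simp only [if_pos hrM, if_neg hnores, ENNReal.toReal_zero]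
      linarith
    · by_cases hresq : (insert r M).card = n - 1 + 1
      · -- reset
        have hMc : M.card = n - 1 := ((reset_iff hM).1 hresq).2
        have hupd : markUpdate (n-1) M r = {r} := markUpdate_reset hM hrM hMc
        have hcard1 : (Finset.univ \ M).card = 1 := by rw [card_univ_sdiff]; omega
        have hstep : (((((Finset.univ \ M).card : ℝ≥0∞)))⁻¹).toReal = 1 := by
          rw [hcard1]; simp
        rw [hupd] at hrec
        have hc1 : ({r} : Finset (Fin n)).card = 1 := Finset.card_singleton r
        rw [hc1] at hrec
        have hnk : n - M.card = 1 := by omega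
        have hh1 : (harmonic 1 : ℝ) = 1 := by norm_num [harmonic_succ]
        have hnm1 : (harmonic (n - 1) : ℝ) = (harmonic (n-1) : ℝ) := rfl
        rw [if_neg hrM, if_pos hresq, hstep, hnk, hh1, hupd]
        linarith
      · -- unmarked, no reset
        have hupd : markUpdate (n-1) M r = insert r M := markUpdate_no_reset hresq
        have hcins : (insert r M).card = M.card + 1 := Finset.card_insert_of_notMem hrM
        have hMlt : M.card < n - 1 := by omega
        set s := n - M.card with hs
        have hs2 : 2 ≤ s := by omega
        have hcard : (Finset.univ \ M).card = s := by rw [card_univ_sdiff]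
        have hstep : (((((Finset.univ \ M).card : ℝ≥0∞)))⁻¹).toReal = (s:ℝ)⁻¹ := by
          rw [hcard]
          rw [ENNReal.toReal_inv]
          simp
        rw [hupd] at hrec
        rw [hcins] at hrec
        have hnk : n - (M.card + 1) = s - 1 := by omega
        rw [hnk] at hrec
        have hharm : (harmonic s : ℝ) = (harmonic (s-1) : ℝ) + (s:ℝ)⁻¹ := by
          have h1 : s - 1 + 1 = s := by omega
          have := harmonic_succ (s-1)
          rw [h1] at this
          rw [this]
          push_cast [h1]
          norm_num
        rw [if_neg hrM, if_neg hresq, hstep, hupd, hharm]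
        linarith

/-! ### Offline lower bound -/

lemma resets_le_cost (hn : 2 ≤ n) : ∀ (σ : List (Fin n)) (Cs : List (Finset (Fin n)))
    (M : Finset (Fin n)) (h : Fin n), M.card ≤ n - 1 → Serves (n-1) σ Cs →
    resets (n-1) σ M ≤ listCost (Finset.univ.erase h) Cs + (if h ∈ M then 1 else 0) := by
  intro σ
  induction σ with
  | nil =>
    intro Cs M h hM hserve
    cases hserve.1
    simp [resets]
  | cons r rest ih =>
    intro Cs M h hM hserve
    obtain ⟨hf, hcards⟩ := hserve
    rcases List.forall₂_cons_left_iff.1 hf with ⟨C', Cs', hrC', hf', rfl⟩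
    have hC'card : C'.card = n - 1 := hcards C' (by simp)
    -- C' is the complement of a single hole h'
    have hcompl : (Finset.univ \ C').card = 1 := by
      rw [card_univ_sdiff, hC'card]; omega
    obtain ⟨h', hh'⟩ := Finset.card_eq_one.1 hcompl
    have hC'eq : C' = Finset.univ.erase h' := by
      have h1 : C' = Finset.univ \ (Finset.univ \ C') :=
        (Finset.sdiff_sdiff_eq_self (Finset.subset_univ C')).symm
      rw [h1, hh', ← Finset.erase_eq]
    have hrh' : r ≠ h' := by
      intro he
      rw [hC'eq, he] at hrC'
      simp at hrC'
    have hM' : (markUpdate (n-1) M r).card ≤ n - 1 := card_markUpdate_le (by omega) M r hM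
    have hihr := ih Cs' (markUpdate (n-1) M r) h' hM' ⟨hf', fun C hC => hcards C (by simp [hC])⟩
    -- step cost
    have hstepcost : ((Finset.univ.erase h') \ (Finset.univ.erase h)).card
        = if h = h' then 0 else 1 := by
      split_ifs with hhh
      · rw [hhh]; simp
      · rw [_root_.erase_sdiff_erase (fun he => hhh he.symm)]
        simp
    have hlc : listCost (Finset.univ.erase h) (C' :: Cs')
        = (if h = h' then 0 else 1) + listCost (Finset.univ.erase h') Cs' := by
      show ((C' \ (Finset.univ.erase h)).card) + listCost C' Cs' = _
      rw [hC'eq, hstepcost]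
    have hrr : resets (n-1) (r :: rest) (M : Finset (Fin n))
        = (if (insert r M).card = n - 1 + 1 then 1 else 0)
          + resets (n-1) rest (markUpdate (n-1) M r) := rfl
    rw [hlc, hrr]
    -- final combinatorial inequality
    have hfin : (if (insert r M).card = n - 1 + 1 then 1 else 0)
        + (if h' ∈ markUpdate (n-1) M r then 1 else 0)
        ≤ (if h = h' then 0 else 1) + (if h ∈ M then 1 else 0) := by
      by_cases hresq : (insert r M).card = n - 1 + 1
      · obtain ⟨hr2, hc2⟩ := (reset_iff hM).1 hresq
        have hupd : markUpdate (n-1) M r = {r} := markUpdate_reset hM hr2 hc2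
        have hsing : Finset.univ \ M = {r} := univ_sdiff_eq_singleton rfl (by omega) hr2 hc2
        have hh'M' : h' ∉ markUpdate (n-1) M r := by
          rw [hupd]
          simp [Ne.symm hrh']
        rw [if_pos hresq, if_neg hh'M']
        by_cases hhh : h = h'
        · have hhM : h ∈ M := by
            by_contra hhM
            have : h ∈ Finset.univ \ M := by simp [hhM]
            rw [hsing] at this
            simp at this
            rw [hhh] at this
            exact hrh' this.symm
          rw [if_pos hhM, if_pos hhh]
        · rw [if_neg hhh]
          omega
      · have hupd : markUpdate (n-1) M r = insert r M := markUpdate_no_reset hresq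
        rw [if_neg hresq]
        by_cases hhh : h = h'
        · have : h' ∈ markUpdate (n-1) M r → h ∈ M := by
            intro hmem
            rw [hupd, Finset.mem_insert] at hmem
            rcases hmem with he | hm
            · exact absurd he.symm hrh'
            · rw [hhh]; exact hm
          rw [if_pos hhh]
          split_ifs with h1 h2
          · omega
          · exact absurd (this h1) h2
          · omega
          · omega
        · rw [if_neg hhh]
          split_ifs <;> omega
    omega

/-! ### Existence of a service -/

noncomputable def nxtHole (hn : 2 ≤ n) (h r : Fin n) : Fin n :=
  if r = h then (if h = (⟨0, by omega⟩ : Fin n) then ⟨1, by omega⟩ else ⟨0, by omega⟩) else h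

lemma nxtHole_ne (hn : 2 ≤ n) (h r : Fin n) : nxtHole hn h r ≠ r := by
  unfold nxtHole
  split_ifs with h1 h2
  · rw [h1, h2]
    intro he
    have := Fin.mk.injEq (n := n) 1 (by omega) 0 (by omega) ▸ he
    simp [Fin.ext_iff] at he
  · rw [h1]
    intro he
    exact h2 he.symm
  · intro he
    exact h1 he.symm

noncomputable def serveList (hn : 2 ≤ n) : Fin n → List (Fin n) → List (Finset (Fin n))
  | _, [] => []
  | h, r :: rest =>
      (Finset.univ.erase (nxtHole hn h r)) :: serveList hn (nxtHole hn h r) rest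

lemma serveList_serves (hn : 2 ≤ n) : ∀ (σ : List (Fin n)) (h : Fin n),
    Serves (n-1) σ (serveList hn h σ) := by
  intro σ
  induction σ with
  | nil => intro h; exact ⟨List.Forall₂.nil, by simp [serveList]⟩
  | cons r rest ih =>
    intro h
    obtain ⟨hf, hc⟩ := ih (nxtHole hn h r)
    constructor
    · refine List.Forall₂.cons ?_ hf
      simp only [Finset.mem_erase, Finset.mem_univ, and_true]
      exact Ne.symm (nxtHole_ne hn h r)
    · intro C hC
      rcases List.mem_cons.1 hC with rfl | hC'
      · rw [Finset.card_erase_of_mem (Finset.mem_univ _), Finset.card_univ]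
        simp
      · exact hc C hC'

end Development

/-- The marking algorithm of type `(n−1, n)` is `H_{n−1}`-competitive. -/
theorem marking_is_H_competitive_n_minus_one (n : ℕ) (hn : 2 ≤ n) :
    ∃ a : ℝ, ∀ σ : List (Fin n),
      expCost (n - 1) (markingKernel (n - 1) n) σ
        ≤ (harmonic (n - 1) : ℝ) * (OPT (n - 1) n σ : ℝ) + a := by
  refine ⟨1, fun σ => ?_⟩
  set h0 : Fin n := ⟨n - 1, by omega⟩ with hh0
  have hinit : initConf (n-1) n = Finset.univ.erase h0 := initConf_eq_erase (by omega)
  have hinitcard : (initConf (n-1) n).card ≤ n - 1 := le_of_eq (card_initConf' (by omega))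
  -- Step 1: expCost = (EC …).toReal
  have h1 : expCost (n-1) (markingKernel (n-1) n) σ
      = (EC (markingKernel (n-1) n) σ [] (initConf (n-1) n)).toReal := by
    unfold expCost EC run
    rw [ENNReal.tsum_toReal_eq]
    · refine tsum_congr fun Cs => ?_
      rw [ENNReal.toReal_mul]
      simp
    · intro Cs
      exact ENNReal.mul_ne_top (PMF.apply_ne_top _ _) (by simp)
  -- Step 2: EC = phcost via the key identity at the empty history
  have hmarks : marksAfter (n-1) ([] : List (Fin n)) = initConf (n-1) n := rfl
  have hsdiff : Finset.univ \ initConf (n-1) n = {h0} := by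
    rw [hinit, Finset.erase_eq, Finset.sdiff_sdiff_eq_self (Finset.subset_univ _)]
  have h2 : EC (markingKernel (n-1) n) σ [] (initConf (n-1) n)
      = phcost (n-1) σ (initConf (n-1) n) := by
    have := key_identity hn σ []
    rw [hmarks, hsdiff] at this
    simpa [hinit] using this
  -- Step 3: harmonic bound on phcost
  have h3 : (phcost (n-1) σ (initConf (n-1) n)).toReal
      ≤ (harmonic (n-1) : ℝ) * (resets (n-1) σ (initConf (n-1) n) : ℝ)
        + ((harmonic (n - (initConf (n-1) n).card) : ℝ) - 1) := by
    exact phcost_bound hn σ _ hinitcard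
  have hcard0 : n - (initConf (n-1) n).card = 1 := by
    rw [card_initConf' (by omega)]; omega
  have hh1 : (harmonic 1 : ℝ) = 1 := by norm_num [harmonic_succ]
  rw [hcard0, hh1] at h3
  -- Step 4: OPT lower bound via resets
  have hOPTmem : OPT (n-1) n σ ∈
      {m | ∃ Cs, Serves (n-1) σ Cs ∧ listCost (initConf (n-1) n) Cs = m} := by
    apply Nat.sInf_mem
    exact ⟨listCost (initConf (n-1) n) (serveList hn h0 σ),
      serveList hn h0 σ, serveList_serves hn σ h0, rfl⟩
  obtain ⟨Cs, hserve, hcost⟩ := hOPTmem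
  have hh0init : h0 ∉ initConf (n-1) n := by
    rw [hinit]
    simp
  have h4 : resets (n-1) σ (initConf (n-1) n) ≤ OPT (n-1) n σ := by
    have := resets_le_cost hn σ Cs (initConf (n-1) n) h0 hinitcard hserve
    rw [if_neg hh0init, ← hinit] at this
    omega
  -- Combine
  have hH0 : (0:ℝ) ≤ (harmonic (n-1) : ℝ) := by
    have := one_le_harmonic_s1 (m := n-1) (by omega)
    have h' : (1:ℝ) ≤ (harmonic (n-1) : ℝ) := by exact_mod_cast this
    linarith
  have h5 : (resets (n-1) σ (initConf (n-1) n) : ℝ) ≤ (OPT (n-1) n σ : ℝ) := by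
    exact_mod_cast h4
  rw [h1, h2]
  have := mul_le_mul_of_nonneg_left h5 hH0
  linarith
end
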